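/- Suppose h : X × U × Θ → ℝ has partial derivatives satisfying: ∂h/∂x is ℓ_{h,x}-Lipschitz in u, ∂h/∂u is ℓ_{h,u}-Lipschitz in u and bounded in norm by L_{h,u}, f(·,a) has x-derivative bounded by L_{f,x}, and ψ has x-derivative bounded by L_{ψ,x}. Define h*(x,θ) = h(x, ψ(x,θ) - f(x,a*), θ) and ĥ(x,θ) = h(x, ψ(x,θ) - f(x,â), θ). Then ‖∂h*/∂x − ∂ĥ/∂x‖ at any point (x,θ) is bounded by (ℓ_{h,x} + ℓ_{h,u}L_{f,x} + ℓ_{h,u}L_{ψ,x})·ε + L_{h,u}·ε', where ε = ‖f(x,a*) − f(x,â)‖ and ε' = ‖∂f/∂x(x,a*) − ∂f/∂x(x,â)‖. -/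

import Mathlib

/-!
Subtracting the two chain-rule expressions and regrouping,
`(P₁ + Q₁ ∘ M₁) - (P₂ + Q₂ ∘ M₂) = (P₁ - P₂) + (Q₁ - Q₂) ∘ M₁ + Q₂ ∘ (M₁ - M₂)`.
The two inner arguments `ψ - f(·, a*)` and `ψ - f(·, â)` differ by `f(·, â) - f(·, a*)`, so the
Lipschitz bounds control the first two terms by `ε`, while the boundedness of `∂h/∂u` controls the
last one by `ε'`.
-/

namespace ContinuousLinearMap

variable {𝕜 X U G : Type*} [NontriviallyNormedField 𝕜]
  [NormedAddCommGroup X] [NormedSpace 𝕜 X] [NormedAddCommGroup U] [NormedSpace 𝕜 U]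
  [NormedAddCommGroup G] [NormedSpace 𝕜 G]

theorem add_comp_sub_add_comp (P₁ P₂ : X →L[𝕜] G) (Q₁ Q₂ : U →L[𝕜] G) (M₁ M₂ : X →L[𝕜] U) :
    (P₁ + Q₁.comp M₁) - (P₂ + Q₂.comp M₂)
      = (P₁ - P₂) + (Q₁ - Q₂).comp M₁ + Q₂.comp (M₁ - M₂) := by
  ext v
  simp only [sub_apply, add_apply, comp_apply, map_sub]
  abel

theorem norm_add_comp_sub_add_comp_le (P₁ P₂ : X →L[𝕜] G) (Q₁ Q₂ : U →L[𝕜] G)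
    (M₁ M₂ : X →L[𝕜] U) :
    ‖(P₁ + Q₁.comp M₁) - (P₂ + Q₂.comp M₂)‖
      ≤ ‖P₁ - P₂‖ + ‖Q₁ - Q₂‖ * ‖M₁‖ + ‖Q₂‖ * ‖M₁ - M₂‖ := by
  rw [add_comp_sub_add_comp]
  calc ‖(P₁ - P₂) + (Q₁ - Q₂).comp M₁ + Q₂.comp (M₁ - M₂)‖
      ≤ ‖P₁ - P₂‖ + ‖(Q₁ - Q₂).comp M₁‖ + ‖Q₂.comp (M₁ - M₂)‖ := norm_add₃_le
    _ ≤ ‖P₁ - P₂‖ + ‖Q₁ - Q₂‖ * ‖M₁‖ + ‖Q₂‖ * ‖M₁ - M₂‖ := by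
      gcongr <;> exact opNorm_comp_le _ _

end ContinuousLinearMap

/-- Difference of the x-partial derivatives of the exact and inexact surrogate costs. -/
theorem stmt_1 {X U Th A : Type*} [NormedAddCommGroup X] [NormedSpace ℝ X]
    [NormedAddCommGroup U] [NormedSpace ℝ U]
    (ψ : X → Th → U) (f : X → A → U)
    (Dhx : X → U → Th → (X →L[ℝ] ℝ)) (Dhu : X → U → Th → (U →L[ℝ] ℝ))
    (Dfx : X → A → (X →L[ℝ] U)) (Dψx : X → Th → (X →L[ℝ] U))
    (ℓhx ℓhu Lhu Lfx Lψx : ℝ)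
    (h1 : ∀ x u u' θ, ‖Dhx x u θ - Dhx x u' θ‖ ≤ ℓhx * ‖u - u'‖)
    (h2 : ∀ x u u' θ, ‖Dhu x u θ - Dhu x u' θ‖ ≤ ℓhu * ‖u - u'‖)
    (h3 : ∀ x u θ, ‖Dhu x u θ‖ ≤ Lhu)
    (h4 : ∀ x a, ‖Dfx x a‖ ≤ Lfx)
    (h5 : ∀ x θ, ‖Dψx x θ‖ ≤ Lψx)
    (x : X) (θ : Th) (astar ahat : A) :
    ‖(Dhx x (ψ x θ - f x astar) θ
        + (Dhu x (ψ x θ - f x astar) θ).comp (Dψx x θ - Dfx x astar))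
      - (Dhx x (ψ x θ - f x ahat) θ
        + (Dhu x (ψ x θ - f x ahat) θ).comp (Dψx x θ - Dfx x ahat))‖
      ≤ (ℓhx + ℓhu * Lfx + ℓhu * Lψx) * ‖f x astar - f x ahat‖
        + Lhu * ‖Dfx x astar - Dfx x ahat‖ := by
  set ε := ‖f x astar - f x ahat‖
  have hu : ‖(ψ x θ - f x astar) - (ψ x θ - f x ahat)‖ = ε := by
    rw [sub_sub_sub_cancel_left, norm_sub_rev]
  have hM : ‖(Dψx x θ - Dfx x astar) - (Dψx x θ - Dfx x ahat)‖ = ‖Dfx x astar - Dfx x ahat‖ := by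
    rw [sub_sub_sub_cancel_left, norm_sub_rev]
  have hDhx := hu ▸ h1 x (ψ x θ - f x astar) (ψ x θ - f x ahat) θ
  have hDhu := hu ▸ h2 x (ψ x θ - f x astar) (ψ x θ - f x ahat) θ
  have hDψf : ‖Dψx x θ - Dfx x astar‖ ≤ Lψx + Lfx :=
    (norm_sub_le _ _).trans (add_le_add (h5 x θ) (h4 x astar))
  refine (ContinuousLinearMap.norm_add_comp_sub_add_comp_le _ _ _ _ _ _).trans ?_
  rw [hM]
  calc _ ≤ ℓhx * ε + ℓhu * ε * (Lψx + Lfx) + Lhu * ‖Dfx x astar - Dfx x ahat‖ := by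
        gcongr
        · exact (norm_nonneg _).trans hDhu
        · exact h3 _ _ _
    _ = _ := by ring
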